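/- Define the initial discrete fluxes F^0_j = F_j[u^0] for j∈{−N+1,…,N−1} (with interface pair (c(u^0_{−1/2},u^0_{1/2}),d(u^0_{−1/2},u^0_{1/2})) at j=0). Then max_{j∈{−N+1,…,N−1}} |F^0_j| ≤ max_{i=1,2} sup_{(a,b)∈[0,1]²}|G_i(a,b)| + 2L. -/

import Mathlib

open Set

noncomputable section

/-- The monotone graph `π̃` associated to an increasing capillary pressure function `π`. -/
def tildePi (π : ℝ → ℝ) (s : ℝ) : Set ℝ :=
  if s = 0 then Set.Iic (π 0) else if s = 1 then Set.Ici (π 1) else {π s}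

/-- The connection condition `π̃₁(c) ∩ π̃₂(d) ≠ ∅`. -/
def Connects (π₁ π₂ : ℝ → ℝ) (c d : ℝ) : Prop :=
  (tildePi π₁ c ∩ tildePi π₂ d).Nonempty

/-- The porosity `ϕ_{i(j)}` of the cell `(x_j, x_{j+1})` (indexed by `j`, representing the
unknown `u_{j+1/2}`): `ϕ₁` if `j < 0` (cell in `Ω₁`), `ϕ₂` if `j ≥ 0` (cell in `Ω₂`). -/
def phiCoef (ϕ₁ ϕ₂ : ℝ) (j : ℤ) : ℝ := if j < 0 then ϕ₁ else ϕ₂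

/-- The numerical flux `F_j[v]` through `x_j`, for a vector `v` (where `v j` stands for
`v_{j+1/2}`), with boundary data `ub = ū`, `uB = ū̄` and interface function `c`. -/
def numFlux (G₁ G₂ : ℝ → ℝ → ℝ) (φ₁ φ₂ : ℝ → ℝ) (c : ℝ → ℝ → ℝ) (δx : ℝ) (N : ℤ)
    (ub uB : ℝ) (v : ℤ → ℝ) (j : ℤ) : ℝ :=
  if j = -N then G₁ ub (v (-N))
  else if j = N then G₂ (v (N - 1)) uB
  else if j < 0 then G₁ (v (j - 1)) (v j) - (φ₁ (v j) - φ₁ (v (j - 1))) / δx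
  else if j = 0 then
    G₁ (v (-1)) (c (v (-1)) (v 0)) - 2 * (φ₁ (c (v (-1)) (v 0)) - φ₁ (v (-1))) / δx
  else G₂ (v (j - 1)) (v j) - (φ₂ (v j) - φ₂ (v (j - 1))) / δx

/-- The left-hand side of the implicit finite volume scheme at time step `n → n+1`,
cell `j`. -/
def schemeLHS (G₁ G₂ : ℝ → ℝ → ℝ) (φ₁ φ₂ : ℝ → ℝ) (c : ℝ → ℝ → ℝ)
    (ϕ₁ ϕ₂ δx δt : ℝ) (N : ℤ) (ubar ubbar : ℕ → ℝ) (u : ℕ → ℤ → ℝ)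
    (n : ℕ) (j : ℤ) : ℝ :=
  phiCoef ϕ₁ ϕ₂ j * (u (n + 1) j - u n j) * δx / δt
    + numFlux G₁ G₂ φ₁ φ₂ c δx N (ubar (n + 1)) (ubbar (n + 1)) (u (n + 1)) (j + 1)
    - numFlux G₁ G₂ φ₁ φ₂ c δx N (ubar (n + 1)) (ubbar (n + 1)) (u (n + 1)) j

/-- `u` takes values in `[0,1]` on the computational cells up to time level `M`. -/
def InRange (N : ℤ) (M : ℕ) (u : ℕ → ℤ → ℝ) : Prop :=
  ∀ n ≤ M, ∀ j ∈ Finset.Icc (-N) (N - 1), u n j ∈ Set.Icc (0 : ℝ) 1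

/-- `u` is a discrete solution of the implicit finite volume scheme. -/
def IsDiscreteSolution (G₁ G₂ : ℝ → ℝ → ℝ) (φ₁ φ₂ : ℝ → ℝ) (c : ℝ → ℝ → ℝ)
    (ϕ₁ ϕ₂ δx δt : ℝ) (N : ℤ) (M : ℕ) (ubar ubbar : ℕ → ℝ) (u : ℕ → ℤ → ℝ) : Prop :=
  InRange N M u ∧ ∀ n < M, ∀ j ∈ Finset.Icc (-N) (N - 1),
    schemeLHS G₁ G₂ φ₁ φ₂ c ϕ₁ ϕ₂ δx δt N ubar ubbar u n j = 0

/-- `u` is a discrete supersolution of the implicit finite volume scheme. -/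
def IsDiscreteSupersolution (G₁ G₂ : ℝ → ℝ → ℝ) (φ₁ φ₂ : ℝ → ℝ) (c : ℝ → ℝ → ℝ)
    (ϕ₁ ϕ₂ δx δt : ℝ) (N : ℤ) (M : ℕ) (ubar ubbar : ℕ → ℝ) (u : ℕ → ℤ → ℝ) : Prop :=
  InRange N M u ∧ ∀ n < M, ∀ j ∈ Finset.Icc (-N) (N - 1),
    0 ≤ schemeLHS G₁ G₂ φ₁ φ₂ c ϕ₁ ϕ₂ δx δt N ubar ubbar u n j

/-- `u` is a discrete subsolution of the implicit finite volume scheme. -/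
def IsDiscreteSubsolution (G₁ G₂ : ℝ → ℝ → ℝ) (φ₁ φ₂ : ℝ → ℝ) (c : ℝ → ℝ → ℝ)
    (ϕ₁ ϕ₂ δx δt : ℝ) (N : ℤ) (M : ℕ) (ubar ubbar : ℕ → ℝ) (u : ℕ → ℤ → ℝ) : Prop :=
  InRange N M u ∧ ∀ n < M, ∀ j ∈ Finset.Icc (-N) (N - 1),
    schemeLHS G₁ G₂ φ₁ φ₂ c ϕ₁ ϕ₂ δx δt N ubar ubbar u n j ≤ 0


/-!
Each cell average `u⁰_{k+1/2}` lies between two values of `u₀` on its cell, so, `φ_i` being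
increasing, `φ_i(u⁰_{j+1/2}) - φ_i(u⁰_{j-1/2})` is squeezed between differences
`φ_i(u₀ x) - φ_i(u₀ y)` with `|x - y| ≤ 2δx`; this bounds the diffusive part of an interior flux
by `2L`. Squeezing in the same way against the traces gives
`|φ₁(u⁰_{-1/2}) - φ₁(u₀(0⁻))| ≤ L δx` and `|φ₂(u⁰_{1/2}) - φ₂(u₀(0⁺))| ≤ L δx`. Since both
`(c, d)` and `(u₀(0⁻), u₀(0⁺))` satisfy the connection condition and the `π_i` are increasing,
these two pairs are ordered componentwise, and then one of the two expressions of `F₀` (through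
`G₁` or through `G₂`) bounds it from below and the other from above.
-/

open MeasureTheory Filter Topology

lemma Set.OrdConnected.mem_of_exists_mem_Icc {α : Type*} [Preorder α] {D S : Set α}
    (hD : D.OrdConnected) (hS : S ⊆ D) {a : α} (ha : ∃ s ∈ S, ∃ s' ∈ S, a ∈ Icc s s') :
    a ∈ D := by
  obtain ⟨s, hs, s', hs', has⟩ := ha
  exact hD.out (hS hs) (hS hs') has

lemma MonotoneOn.abs_sub_le_of_exists_mem_Icc {φ : ℝ → ℝ} {D S T : Set ℝ} (hD : D.OrdConnected)
    (hφ : MonotoneOn φ D) (hS : S ⊆ D) (hT : T ⊆ D) {a b C : ℝ}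
    (ha : ∃ s ∈ S, ∃ s' ∈ S, a ∈ Icc s s') (hb : ∃ t ∈ T, ∃ t' ∈ T, b ∈ Icc t t')
    (hC : ∀ s ∈ S, ∀ t ∈ T, |φ s - φ t| ≤ C) :
    |φ a - φ b| ≤ C := by
  have haD := hD.mem_of_exists_mem_Icc hS ha
  have hbD := hD.mem_of_exists_mem_Icc hT hb
  obtain ⟨s, hs, s', hs', has⟩ := ha
  obtain ⟨t, ht, t', ht', hbt⟩ := hb
  have hlow := (abs_le.1 (hC s hs t' ht')).1
  have hupp := (abs_le.1 (hC s' hs' t ht)).2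
  rw [abs_le]
  constructor
  · linarith [hφ (hS hs) haD has.1, hφ hbD (hT ht') hbt.2]
  · linarith [hφ haD (hS hs') has.2, hφ (hT ht) hbD hbt.1]

lemma dist_le_mul_dist_of_tendsto {α β : Type*} [PseudoMetricSpace α] [PseudoMetricSpace β]
    {g : α → β} {s : Set α} {t : α} {l : β} {L : ℝ}
    (hg : ∀ x ∈ s, ∀ y ∈ s, dist (g x) (g y) ≤ L * dist x y) (ht : t ∈ closure s)
    (hlim : Tendsto g (𝓝[s] t) (𝓝 l)) {x : α} (hx : x ∈ s) :
    dist (g x) l ≤ L * dist x t := by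
  have := mem_closure_iff_nhdsWithin_neBot.1 ht
  refine le_of_tendsto_of_tendsto (tendsto_const_nhds.dist hlim) ?_
    (eventually_nhdsWithin_of_forall fun y hy => hg x hx y hy)
  exact ((((continuous_const.dist continuous_id).tendsto t).mono_left
    nhdsWithin_le_nhds).const_mul L)

lemma exists_mem_Ioo_intervalAverage_mem_Icc {f : ℝ → ℝ} {a b : ℝ} (hab : a < b)
    (hf : IntegrableOn f (Ioo a b)) :
    ∃ x ∈ Ioo a b, ∃ y ∈ Ioo a b, (⨍ t in a..b, f t) ∈ Icc (f x) (f y) := by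
  have hvol : volume (Ioo a b) ≠ 0 := by simpa [Real.volume_Ioo] using hab
  have havg : (⨍ t in a..b, f t) = ⨍ t in Ioo a b, f t := by
    rw [uIoc_of_le hab.le, setAverage_congr Ioo_ae_eq_Ioc]
  obtain ⟨x, hx, hfx⟩ := exists_le_setAverage hvol measure_Ioo_lt_top.ne hf
  obtain ⟨y, hy, hfy⟩ := exists_setAverage_le hvol measure_Ioo_lt_top.ne hf
  exact ⟨x, hx, y, hy, havg ▸ ⟨hfx, hfy⟩⟩

lemma abs_le_sSup_of_continuousOn {G : ℝ → ℝ → ℝ} {s t : Set ℝ} (hs : IsCompact s)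
    (ht : IsCompact t) (hG : ContinuousOn (fun p : ℝ × ℝ => G p.1 p.2) (s ×ˢ t))
    {a b : ℝ} (ha : a ∈ s) (hb : b ∈ t) :
    |G a b| ≤ sSup {r : ℝ | ∃ a ∈ s, ∃ b ∈ t, r = |G a b|} := by
  refine le_csSup (((hs.prod ht).bddAbove_image hG.abs).mono ?_) ⟨a, ha, b, hb, rfl⟩
  rintro r ⟨a, ha, b, hb, rfl⟩
  exact ⟨(a, b), ⟨ha, hb⟩, rfl⟩

lemma lt_of_mem_tildePi {π : ℝ → ℝ} (hπ : StrictMonoOn π (Icc 0 1)) {s t p q : ℝ}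
    (hs : s ∈ Icc (0:ℝ) 1) (ht : t ∈ Icc (0:ℝ) 1) (hst : s < t)
    (hp : p ∈ tildePi π s) (hq : q ∈ tildePi π t) : p < q := by
  have hps : p ≤ π s := by
    unfold tildePi at hp
    split_ifs at hp with h₀ h₁
    · exact h₀ ▸ hp
    · linarith [ht.2]
    · exact hp.le
  have hqt : π t ≤ q := by
    unfold tildePi at hq
    split_ifs at hq with h₀ h₁
    · linarith [hs.1]
    · exact h₁ ▸ hq
    · exact hq.ge
  exact hps.trans_lt ((hπ hs ht hst).trans_le hqt)

lemma Connects.le_or_ge {π₁ π₂ : ℝ → ℝ} {c d c' d' : ℝ} (h : Connects π₁ π₂ c d)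
    (h' : Connects π₁ π₂ c' d') (hπ₁ : StrictMonoOn π₁ (Icc 0 1))
    (hπ₂ : StrictMonoOn π₂ (Icc 0 1)) (hc : c ∈ Icc (0:ℝ) 1) (hd : d ∈ Icc (0:ℝ) 1)
    (hc' : c' ∈ Icc (0:ℝ) 1) (hd' : d' ∈ Icc (0:ℝ) 1) :
    (c, d) ≤ (c', d') ∨ (c', d') ≤ (c, d) := by
  obtain ⟨p, hp₁, hp₂⟩ := h
  obtain ⟨q, hq₁, hq₂⟩ := h'
  rcases lt_trichotomy c c' with hlt | rfl | hgt
  · exact Or.inl ⟨hlt.le, not_lt.1 fun hdd =>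
      (lt_of_mem_tildePi hπ₁ hc hc' hlt hp₁ hq₁).not_gt (lt_of_mem_tildePi hπ₂ hd' hd hdd hq₂ hp₂)⟩
  · exact (le_total d d').imp (fun h => ⟨le_rfl, h⟩) (fun h => ⟨le_rfl, h⟩)
  · exact Or.inr ⟨hgt.le, not_lt.1 fun hdd =>
      (lt_of_mem_tildePi hπ₁ hc' hc hgt hq₁ hp₁).not_gt (lt_of_mem_tildePi hπ₂ hd hd' hdd hp₂ hq₂)⟩

lemma abs_interface_flux_le {π₁ π₂ φ₁ φ₂ : ℝ → ℝ} (hπ₁ : StrictMonoOn π₁ (Icc 0 1))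
    (hπ₂ : StrictMonoOn π₂ (Icc 0 1)) (hφ₁ : MonotoneOn φ₁ (Icc 0 1))
    (hφ₂ : MonotoneOn φ₂ (Icc 0 1)) {a b c d w₁ w₂ g₁ g₂ δ M L : ℝ}
    (hc : c ∈ Icc (0:ℝ) 1) (hd : d ∈ Icc (0:ℝ) 1) (hw₁ : w₁ ∈ Icc (0:ℝ) 1)
    (hw₂ : w₂ ∈ Icc (0:ℝ) 1) (hcd : Connects π₁ π₂ c d) (hw : Connects π₁ π₂ w₁ w₂)
    (hδ : 0 < δ) (hg₁ : |g₁| ≤ M) (hg₂ : |g₂| ≤ M)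
    (heq : g₁ - 2 * (φ₁ c - φ₁ a) / δ = g₂ - 2 * (φ₂ b - φ₂ d) / δ)
    (ha : |φ₁ a - φ₁ w₁| ≤ L * δ) (hb : |φ₂ b - φ₂ w₂| ≤ L * δ) :
    |g₁ - 2 * (φ₁ c - φ₁ a) / δ| ≤ M + 2 * L := by
  have hg₁' := abs_le.1 hg₁
  have hg₂' := abs_le.1 hg₂
  have ha' := abs_le.1 ha
  have hb' := abs_le.1 hb
  rw [mul_div_assoc, mul_div_assoc] at heq
  rw [mul_div_assoc, abs_le]
  -- Both interface values lie on the same side of the traces: one form of the flux gives the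
  -- lower bound and the other the upper bound.
  rcases hcd.le_or_ge hw hπ₁ hπ₂ hc hd hw₁ hw₂ with ⟨hcw, hdw⟩ | ⟨hcw, hdw⟩
  · have hca : (φ₁ c - φ₁ a) / δ ≤ L := (div_le_iff₀ hδ).2 (by linarith [hφ₁ hc hw₁ hcw])
    have hbd : -L ≤ (φ₂ b - φ₂ d) / δ := (le_div_iff₀ hδ).2 (by linarith [hφ₂ hd hw₂ hdw])
    constructor <;> linarith
  · have hca : -L ≤ (φ₁ c - φ₁ a) / δ := (le_div_iff₀ hδ).2 (by linarith [hφ₁ hw₁ hc hcw])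
    have hbd : (φ₂ b - φ₂ d) / δ ≤ L := (div_le_iff₀ hδ).2 (by linarith [hφ₂ hw₂ hd hdw])
    constructor <;> linarith

/-- The cell `(x_k, x_{k+1})` of the mesh of step `1/N`; it carries the unknown `u_{k+1/2}`. -/
def cell (N : ℕ) (k : ℤ) : Set ℝ := Ioo (k / N) ((k + 1) / N)

lemma cell_subset_Ioo {N : ℕ} (hN : 0 < N) {m n k : ℤ} (hm : m ≤ k) (hn : k + 1 ≤ n) :
    cell N k ⊆ Ioo (m / N : ℝ) (n / N) := by
  have hm' : (m : ℝ) ≤ k := by exact_mod_cast hm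
  have hn' : (k : ℝ) + 1 ≤ n := by exact_mod_cast hn
  exact Ioo_subset_Ioo (by gcongr) (by gcongr)

lemma abs_sub_le_of_mem_cell {N : ℕ} {k : ℤ} {x y : ℝ} (hx : x ∈ cell N k)
    (hy : y ∈ Icc (k / N : ℝ) ((k + 1) / N)) : |x - y| ≤ 1 / N := by
  have h := Real.dist_le_of_mem_Icc (Ioo_subset_Icc_self hx) hy
  rwa [← sub_div, add_sub_cancel_left] at h

lemma abs_sub_le_of_mem_cell_of_mem_cell_sub_one {N : ℕ} {j : ℤ} {x y : ℝ}
    (hx : x ∈ cell N j) (hy : y ∈ cell N (j - 1)) : |x - y| ≤ 2 * (1 / N) := by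
  have hj : (j : ℝ) / N ∈ Icc (j / N : ℝ) ((j + 1) / N) :=
    left_mem_Icc.2 (div_le_div_of_nonneg_right (by linarith) N.cast_nonneg)
  have hj' : (j : ℝ) / N ∈ Icc (((j - 1 : ℤ) : ℝ) / N) ((((j - 1 : ℤ) : ℝ) + 1) / N) := by
    push_cast
    rw [sub_add_cancel]
    exact right_mem_Icc.2 (div_le_div_of_nonneg_right (by linarith) N.cast_nonneg)
  calc |x - y| ≤ |x - j / N| + |j / N - y| := abs_sub_le _ _ _
    _ ≤ 1 / N + 1 / N := by
      rw [abs_sub_comm _ y]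
      exact add_le_add (abs_sub_le_of_mem_cell hx hj) (abs_sub_le_of_mem_cell hy hj')
    _ = 2 * (1 / N) := by ring

lemma cell_subset_Ioo_neg_one_one {N : ℕ} (hN : 0 < N) {k : ℤ} (h₁ : -N ≤ k) (h₂ : k < N) :
    cell N k ⊆ Ioo (-1) 1 := by
  have hN' : (N : ℝ) ≠ 0 := by positivity
  simpa [hN'] using cell_subset_Ioo hN h₁ (show k + 1 ≤ N by omega)

lemma cell_subset_Ioo_neg_one_zero {N : ℕ} (hN : 0 < N) {k : ℤ} (h₁ : -N ≤ k) (h₂ : k < 0) :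
    cell N k ⊆ Ioo (-1) 0 := by
  have hN' : (N : ℝ) ≠ 0 := by positivity
  simpa [hN'] using cell_subset_Ioo hN h₁ (show k + 1 ≤ 0 by omega)

lemma cell_subset_Ioo_zero_one {N : ℕ} (hN : 0 < N) {k : ℤ} (h₁ : 0 ≤ k) (h₂ : k < N) :
    cell N k ⊆ Ioo 0 1 := by
  have hN' : (N : ℝ) ≠ 0 := by positivity
  simpa [hN'] using cell_subset_Ioo hN h₁ (show k + 1 ≤ N by omega)

lemma cellAverage_mem_Icc {u : ℝ → ℝ} {N : ℕ} (hN : 0 < N) {k : ℤ} (hu : Measurable u)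
    (hu01 : ∀ x ∈ Ioo (-1:ℝ) 1, u x ∈ Icc (0:ℝ) 1) (h₁ : -N ≤ k) (h₂ : k < N) :
    ∃ s ∈ u '' cell N k, ∃ s' ∈ u '' cell N k,
      (N : ℝ) * ∫ x in (k / N : ℝ)..((k + 1) / N), u x ∈ Icc s s' := by
  have hN' : (0 : ℝ) < N := by exact_mod_cast hN
  have hint : IntegrableOn u (cell N k) :=
    Measure.integrableOn_of_bounded (M := 1) measure_Ioo_lt_top.ne hu.aestronglyMeasurable
      (ae_restrict_of_forall_mem measurableSet_Ioo fun x hx => by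
        have hux := hu01 x (cell_subset_Ioo_neg_one_one hN h₁ h₂ hx)
        rw [Real.norm_eq_abs, abs_le]
        constructor <;> linarith [hux.1, hux.2])
  have hlt : (k / N : ℝ) < (k + 1) / N := by gcongr; linarith
  have havg : (N : ℝ) * ∫ x in (k / N : ℝ)..((k + 1) / N), u x
      = ⨍ x in (k / N : ℝ)..((k + 1) / N), u x := by
    rw [interval_average_eq, smul_eq_mul, ← sub_div, add_sub_cancel_left, one_div, inv_inv]
  obtain ⟨x, hx, y, hy, hxy⟩ := exists_mem_Ioo_intervalAverage_mem_Icc hlt hint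
  exact ⟨u x, mem_image_of_mem u hx, u y, mem_image_of_mem u hy, havg ▸ hxy⟩

lemma cellAverage_mem_Icc_zero_one {u : ℝ → ℝ} {N : ℕ} (hN : 0 < N) {k : ℤ} (hu : Measurable u)
    (hu01 : ∀ x ∈ Ioo (-1:ℝ) 1, u x ∈ Icc (0:ℝ) 1) (h₁ : -N ≤ k) (h₂ : k < N) :
    (N : ℝ) * ∫ x in (k / N : ℝ)..((k + 1) / N), u x ∈ Icc (0:ℝ) 1 :=
  ordConnected_Icc.mem_of_exists_mem_Icc
    (image_subset_iff.2 fun x hx => hu01 x (cell_subset_Ioo_neg_one_one hN h₁ h₂ hx))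
    (cellAverage_mem_Icc hN hu hu01 h₁ h₂)

lemma abs_interior_flux_le {G : ℝ → ℝ → ℝ} {φ u : ℝ → ℝ} {Ω : Set ℝ} {v : ℤ → ℝ} {N : ℕ}
    {j : ℤ} {L M : ℝ} (hN : 0 < N) (hφ : MonotoneOn φ (Icc 0 1))
    (hu : ∀ x ∈ Ω, u x ∈ Icc (0:ℝ) 1)
    (hLip : ∀ x ∈ Ω, ∀ y ∈ Ω, |φ (u x) - φ (u y)| ≤ L * |x - y|) (hL : 0 ≤ L)
    (hG : ∀ a ∈ Icc (0:ℝ) 1, ∀ b ∈ Icc (0:ℝ) 1, |G a b| ≤ M)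
    (hj : cell N j ⊆ Ω) (hj' : cell N (j - 1) ⊆ Ω)
    (hvj : ∃ s ∈ u '' cell N j, ∃ s' ∈ u '' cell N j, v j ∈ Icc s s')
    (hvj' : ∃ s ∈ u '' cell N (j - 1), ∃ s' ∈ u '' cell N (j - 1), v (j - 1) ∈ Icc s s') :
    |G (v (j - 1)) (v j) - (φ (v j) - φ (v (j - 1))) / (1 / N)| ≤ M + 2 * L := by
  have hS : ∀ k, cell N k ⊆ Ω → u '' cell N k ⊆ Icc 0 1 := by
    rintro k hk _ ⟨x, hx, rfl⟩
    exact hu x (hk hx)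
  have hdiff : |φ (v j) - φ (v (j - 1))| ≤ 2 * L * (1 / N) := by
    refine hφ.abs_sub_le_of_exists_mem_Icc ordConnected_Icc (hS j hj) (hS _ hj') hvj hvj' ?_
    rintro _ ⟨x, hx, rfl⟩ _ ⟨y, hy, rfl⟩
    calc |φ (u x) - φ (u y)| ≤ L * |x - y| := hLip x (hj hx) y (hj' hy)
      _ ≤ L * (2 * (1 / N)) := by
        gcongr
        exact abs_sub_le_of_mem_cell_of_mem_cell_sub_one hx hy
      _ = 2 * L * (1 / N) := by ring
  have hδ : (0 : ℝ) < 1 / N := by positivity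
  calc |G (v (j - 1)) (v j) - (φ (v j) - φ (v (j - 1))) / (1 / N)|
      ≤ |G (v (j - 1)) (v j)| + |(φ (v j) - φ (v (j - 1))) / (1 / N)| := abs_sub _ _
    _ ≤ M + 2 * L := by
      refine add_le_add (hG _ (ordConnected_Icc.mem_of_exists_mem_Icc (hS _ hj') hvj') _
        (ordConnected_Icc.mem_of_exists_mem_Icc (hS _ hj) hvj)) ?_
      rwa [abs_div, abs_of_pos hδ, div_le_iff₀ hδ]

lemma abs_sub_trace_le {φ u : ℝ → ℝ} {s C : Set ℝ} {t w v δ L : ℝ}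
    (hφ : MonotoneOn φ (Icc 0 1)) (hφw : ContinuousWithinAt φ (Icc 0 1) w)
    (hw : w ∈ Icc (0:ℝ) 1) (hu : ∀ x ∈ s, u x ∈ Icc (0:ℝ) 1)
    (hLip : ∀ x ∈ s, ∀ y ∈ s, |φ (u x) - φ (u y)| ≤ L * |x - y|) (hL : 0 ≤ L)
    (ht : t ∈ closure s) (hlim : Tendsto u (𝓝[s] t) (𝓝 w))
    (hCs : C ⊆ s) (hCt : ∀ x ∈ C, |x - t| ≤ δ)
    (hv : ∃ a ∈ u '' C, ∃ b ∈ u '' C, v ∈ Icc a b) :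
    |φ v - φ w| ≤ L * δ := by
  have hφu : Tendsto (φ ∘ u) (𝓝[s] t) (𝓝 (φ w)) :=
    hφw.tendsto.comp (tendsto_nhdsWithin_iff.2 ⟨hlim, eventually_nhdsWithin_of_forall hu⟩)
  refine hφ.abs_sub_le_of_exists_mem_Icc ordConnected_Icc ?_ (singleton_subset_iff.2 hw) hv
    ⟨w, rfl, w, rfl, left_mem_Icc.2 le_rfl⟩ ?_
  · rintro _ ⟨x, hx, rfl⟩
    exact hu x (hCs hx)
  · rintro _ ⟨x, hx, rfl⟩ _ hw'
    rw [mem_singleton_iff.1 hw']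
    calc |φ (u x) - φ w| ≤ L * |x - t| := dist_le_mul_dist_of_tendsto hLip ht hφu (hCs hx)
      _ ≤ L * δ := by gcongr; exact hCt x hx

theorem stmt6_general
    (N : ℕ) (δx : ℝ) (hδxdef : δx = 1 / (N : ℝ))
    (π₁ π₂ φ₁ φ₂ : ℝ → ℝ) (G₁ G₂ : ℝ → ℝ → ℝ)
    (hπ₁mono : StrictMonoOn π₁ (Icc 0 1))
    (hπ₂mono : StrictMonoOn π₂ (Icc 0 1))
    (hφ₁mono : StrictMonoOn φ₁ (Icc 0 1)) (hφ₁lip : ∃ K, LipschitzOnWith K φ₁ (Icc 0 1))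
    (hφ₂mono : StrictMonoOn φ₂ (Icc 0 1)) (hφ₂lip : ∃ K, LipschitzOnWith K φ₂ (Icc 0 1))
    (hG₁lip : ∃ K, LipschitzOnWith K (fun p : ℝ × ℝ => G₁ p.1 p.2) (Icc 0 1 ×ˢ Icc 0 1))
    (hG₂lip : ∃ K, LipschitzOnWith K (fun p : ℝ × ℝ => G₂ p.1 p.2) (Icc 0 1 ×ˢ Icc 0 1))
    (c d : ℝ → ℝ → ℝ)
    (hcd : ∀ a ∈ Icc (0:ℝ) 1, ∀ b ∈ Icc (0:ℝ) 1,
      (c a b ∈ Icc (0:ℝ) 1 ∧ d a b ∈ Icc (0:ℝ) 1 ∧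
        G₁ a (c a b) - 2 * (φ₁ (c a b) - φ₁ a) / δx
          = G₂ (d a b) b - 2 * (φ₂ b - φ₂ (d a b)) / δx ∧
        Connects π₁ π₂ (c a b) (d a b)) ∧
      ∀ c' d' : ℝ, c' ∈ Icc (0:ℝ) 1 → d' ∈ Icc (0:ℝ) 1 →
        G₁ a c' - 2 * (φ₁ c' - φ₁ a) / δx = G₂ d' b - 2 * (φ₂ b - φ₂ d') / δx →
        Connects π₁ π₂ c' d' → c' = c a b ∧ d' = d a b)
    (u₀ : ℝ → ℝ) (hu₀meas : Measurable u₀)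
    (hu₀range : ∀ x ∈ Ioo (-1:ℝ) 1, u₀ x ∈ Icc (0:ℝ) 1)
    (L : ℝ) (hL : 0 ≤ L)
    (hLip₁ : ∀ x ∈ Ioo (-1:ℝ) 0, ∀ y ∈ Ioo (-1:ℝ) 0, |φ₁ (u₀ x) - φ₁ (u₀ y)| ≤ L * |x - y|)
    (hLip₂ : ∀ x ∈ Ioo (0:ℝ) 1, ∀ y ∈ Ioo (0:ℝ) 1, |φ₂ (u₀ x) - φ₂ (u₀ y)| ≤ L * |x - y|)
    (u01 u02 : ℝ) (hu01 : u01 ∈ Icc (0:ℝ) 1) (hu02 : u02 ∈ Icc (0:ℝ) 1)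
    (hlim1 : Filter.Tendsto u₀ (nhdsWithin 0 (Ioo (-1:ℝ) 0)) (nhds u01))
    (hlim2 : Filter.Tendsto u₀ (nhdsWithin 0 (Ioo (0:ℝ) 1)) (nhds u02))
    (hconn : Connects π₁ π₂ u01 u02)
    (u0d : ℤ → ℝ)
    (hu0d : ∀ j : ℤ, u0d j = (N : ℝ) * ∫ x in ((j : ℝ) / (N : ℝ))..(((j : ℝ) + 1) / (N : ℝ)), u₀ x) :
    ∀ j ∈ Finset.Icc (-(N : ℤ) + 1) ((N : ℤ) - 1),
      |numFlux G₁ G₂ φ₁ φ₂ c δx (N : ℤ) 0 0 u0d j|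
        ≤ max (sSup {r : ℝ | ∃ a ∈ Icc (0:ℝ) 1, ∃ b ∈ Icc (0:ℝ) 1, r = |G₁ a b|})
              (sSup {r : ℝ | ∃ a ∈ Icc (0:ℝ) 1, ∃ b ∈ Icc (0:ℝ) 1, r = |G₂ a b|})
          + 2 * L := by
  intro j hj
  rw [Finset.mem_Icc] at hj
  have hN : 0 < N := by omega
  subst hδxdef
  obtain ⟨K₁, hK₁⟩ := hφ₁lip
  obtain ⟨K₂, hK₂⟩ := hφ₂lip
  obtain ⟨KG₁, hKG₁⟩ := hG₁lip
  obtain ⟨KG₂, hKG₂⟩ := hG₂lip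
  set M := max (sSup {r : ℝ | ∃ a ∈ Icc (0:ℝ) 1, ∃ b ∈ Icc (0:ℝ) 1, r = |G₁ a b|})
    (sSup {r : ℝ | ∃ a ∈ Icc (0:ℝ) 1, ∃ b ∈ Icc (0:ℝ) 1, r = |G₂ a b|})
  have hG₁M : ∀ a ∈ Icc (0:ℝ) 1, ∀ b ∈ Icc (0:ℝ) 1, |G₁ a b| ≤ M := fun a ha b hb =>
    (abs_le_sSup_of_continuousOn isCompact_Icc isCompact_Icc hKG₁.continuousOn ha hb).trans
      (le_max_left _ _)
  have hG₂M : ∀ a ∈ Icc (0:ℝ) 1, ∀ b ∈ Icc (0:ℝ) 1, |G₂ a b| ≤ M := fun a ha b hb =>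
    (abs_le_sSup_of_continuousOn isCompact_Icc isCompact_Icc hKG₂.continuousOn ha hb).trans
      (le_max_right _ _)
  have hrange₁ : ∀ x ∈ Ioo (-1:ℝ) 0, u₀ x ∈ Icc (0:ℝ) 1 :=
    fun x hx => hu₀range x (Ioo_subset_Ioo_right zero_le_one hx)
  have hrange₂ : ∀ x ∈ Ioo (0:ℝ) 1, u₀ x ∈ Icc (0:ℝ) 1 :=
    fun x hx => hu₀range x (Ioo_subset_Ioo_left (by norm_num) hx)
  have hv : ∀ k : ℤ, -N ≤ k → k < N →
      ∃ s ∈ u₀ '' cell N k, ∃ s' ∈ u₀ '' cell N k, u0d k ∈ Icc s s' :=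
    fun k h₁ h₂ => hu0d k ▸ cellAverage_mem_Icc hN hu₀meas hu₀range h₁ h₂
  have hv01 : ∀ k : ℤ, -N ≤ k → k < N → u0d k ∈ Icc (0:ℝ) 1 :=
    fun k h₁ h₂ => hu0d k ▸ cellAverage_mem_Icc_zero_one hN hu₀meas hu₀range h₁ h₂
  rcases lt_trichotomy j 0 with hj0 | rfl | hj0
  · rw [numFlux, if_neg (by omega), if_neg (by omega), if_pos hj0]
    exact abs_interior_flux_le hN hφ₁mono.monotoneOn hrange₁ hLip₁ hL hG₁M
      (cell_subset_Ioo_neg_one_zero hN (by omega) hj0)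
      (cell_subset_Ioo_neg_one_zero hN (by omega) (by omega))
      (hv j (by omega) (by omega)) (hv (j - 1) (by omega) (by omega))
  · have ha := hv01 (-1) (by omega) (by omega)
    have hb := hv01 0 (by omega) (by omega)
    obtain ⟨⟨hc, hd, heq, hconn₀⟩, -⟩ := hcd _ ha _ hb
    have htr₁ : |φ₁ (u0d (-1)) - φ₁ u01| ≤ L * (1 / N) :=
      abs_sub_trace_le hφ₁mono.monotoneOn (hK₁.continuousOn _ hu01) hu01 hrange₁ hLip₁ hL
        (by simp [closure_Ioo]) hlim1 (cell_subset_Ioo_neg_one_zero hN (by omega) (by omega))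
        (fun x hx => abs_sub_le_of_mem_cell hx (by simp [neg_div])) (hv (-1) (by omega) (by omega))
    have htr₂ : |φ₂ (u0d 0) - φ₂ u02| ≤ L * (1 / N) :=
      abs_sub_trace_le hφ₂mono.monotoneOn (hK₂.continuousOn _ hu02) hu02 hrange₂ hLip₂ hL
        (by simp [closure_Ioo]) hlim2 (cell_subset_Ioo_zero_one hN le_rfl (by omega))
        (fun x hx => abs_sub_le_of_mem_cell hx (by simp)) (hv 0 (by omega) (by omega))
    rw [numFlux, if_neg (by omega), if_neg (by omega), if_neg (lt_irrefl 0), if_pos rfl]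
    exact abs_interface_flux_le hπ₁mono hπ₂mono hφ₁mono.monotoneOn hφ₂mono.monotoneOn hc hd
      hu01 hu02 hconn₀ hconn (by positivity) (hG₁M _ ha _ hc) (hG₂M _ hd _ hb)
      heq htr₁ htr₂
  · rw [numFlux, if_neg (by omega), if_neg (by omega), if_neg (by omega), if_neg (by omega)]
    exact abs_interior_flux_le hN hφ₂mono.monotoneOn hrange₂ hLip₂ hL hG₂M
      (cell_subset_Ioo_zero_one hN hj0.le (by omega))
      (cell_subset_Ioo_zero_one hN (by omega) (by omega))
      (hv j (by omega) (by omega)) (hv (j - 1) (by omega) (by omega))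

/-- Bound on the initial discrete fluxes: `|F_j⁰| ≤ max_i sup |G_i| + 2L` when
`φ_i ∘ u₀` is `L`-Lipschitz on each `Ω_i` and the initial traces satisfy the
capillary pressure connection condition. -/
theorem stmt6
    (N : ℕ) (hN : 0 < N) (δx : ℝ) (hδxdef : δx = 1 / (N : ℝ))
    (π₁ π₂ φ₁ φ₂ : ℝ → ℝ) (G₁ G₂ : ℝ → ℝ → ℝ)
    (hπ₁mono : StrictMonoOn π₁ (Icc 0 1)) (hπ₁lip : ∃ K, LipschitzOnWith K π₁ (Icc 0 1))
    (hπ₂mono : StrictMonoOn π₂ (Icc 0 1)) (hπ₂lip : ∃ K, LipschitzOnWith K π₂ (Icc 0 1))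
    (hφ₁mono : StrictMonoOn φ₁ (Icc 0 1)) (hφ₁lip : ∃ K, LipschitzOnWith K φ₁ (Icc 0 1))
    (hφ₁zero : φ₁ 0 = 0)
    (hφ₂mono : StrictMonoOn φ₂ (Icc 0 1)) (hφ₂lip : ∃ K, LipschitzOnWith K φ₂ (Icc 0 1))
    (hφ₂zero : φ₂ 0 = 0)
    (hG₁lip : ∃ K, LipschitzOnWith K (fun p : ℝ × ℝ => G₁ p.1 p.2) (Icc 0 1 ×ˢ Icc 0 1))
    (hG₁mono : ∀ b ∈ Icc (0:ℝ) 1, MonotoneOn (fun a => G₁ a b) (Icc 0 1))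
    (hG₁anti : ∀ a ∈ Icc (0:ℝ) 1, AntitoneOn (fun b => G₁ a b) (Icc 0 1))
    (hG₂lip : ∃ K, LipschitzOnWith K (fun p : ℝ × ℝ => G₂ p.1 p.2) (Icc 0 1 ×ˢ Icc 0 1))
    (hG₂mono : ∀ b ∈ Icc (0:ℝ) 1, MonotoneOn (fun a => G₂ a b) (Icc 0 1))
    (hG₂anti : ∀ a ∈ Icc (0:ℝ) 1, AntitoneOn (fun b => G₂ a b) (Icc 0 1))
    (c d : ℝ → ℝ → ℝ)
    (hcd : ∀ a ∈ Icc (0:ℝ) 1, ∀ b ∈ Icc (0:ℝ) 1,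
      (c a b ∈ Icc (0:ℝ) 1 ∧ d a b ∈ Icc (0:ℝ) 1 ∧
        G₁ a (c a b) - 2 * (φ₁ (c a b) - φ₁ a) / δx
          = G₂ (d a b) b - 2 * (φ₂ b - φ₂ (d a b)) / δx ∧
        Connects π₁ π₂ (c a b) (d a b)) ∧
      ∀ c' d' : ℝ, c' ∈ Icc (0:ℝ) 1 → d' ∈ Icc (0:ℝ) 1 →
        G₁ a c' - 2 * (φ₁ c' - φ₁ a) / δx = G₂ d' b - 2 * (φ₂ b - φ₂ d') / δx →
        Connects π₁ π₂ c' d' → c' = c a b ∧ d' = d a b)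
    (u₀ : ℝ → ℝ) (hu₀meas : Measurable u₀)
    (hu₀range : ∀ x ∈ Ioo (-1:ℝ) 1, u₀ x ∈ Icc (0:ℝ) 1)
    (L : ℝ) (hL : 0 ≤ L)
    (hLip₁ : ∀ x ∈ Ioo (-1:ℝ) 0, ∀ y ∈ Ioo (-1:ℝ) 0, |φ₁ (u₀ x) - φ₁ (u₀ y)| ≤ L * |x - y|)
    (hLip₂ : ∀ x ∈ Ioo (0:ℝ) 1, ∀ y ∈ Ioo (0:ℝ) 1, |φ₂ (u₀ x) - φ₂ (u₀ y)| ≤ L * |x - y|)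
    (u01 u02 : ℝ) (hu01 : u01 ∈ Icc (0:ℝ) 1) (hu02 : u02 ∈ Icc (0:ℝ) 1)
    (hlim1 : Filter.Tendsto u₀ (nhdsWithin 0 (Ioo (-1:ℝ) 0)) (nhds u01))
    (hlim2 : Filter.Tendsto u₀ (nhdsWithin 0 (Ioo (0:ℝ) 1)) (nhds u02))
    (hconn : Connects π₁ π₂ u01 u02)
    (u0d : ℤ → ℝ)
    (hu0d : ∀ j : ℤ, u0d j = (N : ℝ) * ∫ x in ((j : ℝ) / (N : ℝ))..(((j : ℝ) + 1) / (N : ℝ)), u₀ x) :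
    ∀ j ∈ Finset.Icc (-(N : ℤ) + 1) ((N : ℤ) - 1),
      |numFlux G₁ G₂ φ₁ φ₂ c δx (N : ℤ) 0 0 u0d j|
        ≤ max (sSup {r : ℝ | ∃ a ∈ Icc (0:ℝ) 1, ∃ b ∈ Icc (0:ℝ) 1, r = |G₁ a b|})
              (sSup {r : ℝ | ∃ a ∈ Icc (0:ℝ) 1, ∃ b ∈ Icc (0:ℝ) 1, r = |G₂ a b|})
          + 2 * L :=
  stmt6_general N δx hδxdef π₁ π₂ φ₁ φ₂ G₁ G₂ hπ₁mono hπ₂mono hφ₁mono hφ₁lip hφ₂mono hφ₂lip hG₁lip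
    hG₂lip c d hcd u₀ hu₀meas hu₀range L hL hLip₁ hLip₂ u01 u02 hu01 hu02 hlim1 hlim2 hconn u0d hu0d
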